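/- arXiv:1205.0036 — 2 statements merged into one kernel-verified Lean document; each statement's English description precedes it below -/
import Mathlib

section
/- For every odd integer m ≥ 5, letting c = ((m−1)/2, (m−1)/2) be the center of the grid {0, …, m−1}², there exists a subset S of {0, …, m−1}² of cardinality exactly (m² − 9)/2 such that: (i) no two distinct points of S are adjacent in the grid, i.e. any two distinct points of S have ℓ¹ distance at least 2; and (ii) every point of S has ℓ∞ distance at least 2 from c (so no point of S lies in the central 3×3 square). -/
/-- For every odd integer `m ≥ 5`, with center `c = ((m−1)/2, (m−1)/2)` of the grid
`{0, …, m−1}²`, there is a subset `S` of the grid of cardinality `(m² − 9)/2` such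
that (i) any two distinct points of `S` are at `ℓ¹` distance at least `2`
(no two are adjacent), and (ii) every point of `S` is at `ℓ∞` distance at least `2`
from `c` (so `S` avoids the central `3×3` square). -/
theorem stmt_6 (m : ℤ) (hm : Odd m) (hm5 : 5 ≤ m) :
    ∃ S : Finset (ℤ × ℤ),
      (∀ p ∈ S, 0 ≤ p.1 ∧ p.1 ≤ m - 1 ∧ 0 ≤ p.2 ∧ p.2 ≤ m - 1) ∧
      (S.card : ℤ) = (m ^ 2 - 9) / 2 ∧
      (∀ p ∈ S, ∀ q ∈ S, p ≠ q → 2 ≤ |p.1 - q.1| + |p.2 - q.2|) ∧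
      (∀ p ∈ S, 2 ≤ max |(m - 1) / 2 - p.1| |(m - 1) / 2 - p.2|) := by
  obtain ⟨c, hc⟩ : ∃ c : ℤ, m = 2*c+1 := by
    obtain ⟨t, ht⟩ := hm; exact ⟨t, by omega⟩
  have hc2 : 2 ≤ c := by omega
  have hmc : (m-1)/2 = c := by omega
  set t := c*c with ht
  have ht4 : 4 ≤ t := by nlinarith
  have hm0 : (0:ℤ) < m := by omega
  set f : ℤ → ℤ × ℤ := fun k => (2*k / m, 2*k % m) with hf
  have key : ∀ k : ℤ, 0 ≤ k → k ≤ 2*t+2*c →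
      0 ≤ (f k).1 ∧ (f k).1 ≤ m - 1 ∧ 0 ≤ (f k).2 ∧ (f k).2 ≤ m - 1 ∧
      2*k = m * (f k).1 + (f k).2 := by
    intro k hk0 hk1
    simp only [hf]
    have hdm : m * (2*k / m) + 2*k % m = 2*k := Int.mul_ediv_add_emod _ _
    have hy0 : 0 ≤ 2*k % m := Int.emod_nonneg _ (by omega)
    have hy1 : 2*k % m < m := Int.emod_lt_of_pos _ hm0
    have hx0 : 0 ≤ 2*k / m := Int.ediv_nonneg (by omega) (by omega)
    have hmm : m * m = 4*t+4*c+1 := by rw [hc, ht]; ring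
    have hx1 : 2*k / m ≤ m - 1 := by
      by_contra h
      push_neg at h
      have : m * m ≤ m * (2*k / m) :=
        mul_le_mul_of_nonneg_left (by omega) (by omega)
      omega
    exact ⟨hx0, hx1, hy0, by omega, by omega⟩
  have hinj : ∀ a b : ℤ, f a = f b → a = b := by
    intro a b h
    have e1 : m * (2*a / m) + 2*a % m = 2*a := Int.mul_ediv_add_emod _ _
    have e2 : m * (2*b / m) + 2*b % m = 2*b := Int.mul_ediv_add_emod _ _
    simp only [hf, Prod.mk.injEq] at h
    rw [h.1, h.2] at e1
    omega
  set B : Finset ℤ := {t-1, t, t+c, t+2*c, t+2*c+1} with hB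
  set A : Finset ℤ := Finset.Icc 0 (2*t+2*c) with hA
  have hBsub : B ⊆ A := by
    intro x hx
    simp only [hB, Finset.mem_insert, Finset.mem_singleton] at hx
    simp only [hA, Finset.mem_Icc]
    omega
  have hB5 : B.card = 5 := by
    rw [hB,
      Finset.card_insert_of_notMem (by
        simp only [Finset.mem_insert, Finset.mem_singleton]; omega),
      Finset.card_insert_of_notMem (by
        simp only [Finset.mem_insert, Finset.mem_singleton]; omega),
      Finset.card_insert_of_notMem (by
        simp only [Finset.mem_insert, Finset.mem_singleton]; omega),
      Finset.card_insert_of_notMem (by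
        simp only [Finset.mem_singleton]; omega),
      Finset.card_singleton]
  refine ⟨(A \ B).image f, ?_, ?_, ?_, ?_⟩
  · -- grid membership
    intro p hp
    obtain ⟨k, hk, rfl⟩ := Finset.mem_image.mp hp
    rw [Finset.mem_sdiff, hA, Finset.mem_Icc] at hk
    obtain ⟨h1, h2, h3, h4, h5⟩ := key k hk.1.1 hk.1.2
    exact ⟨h1, h2, h3, h4⟩
  · -- cardinality
    rw [Finset.card_image_of_injOn (fun a _ b _ h => hinj a b h),
      Finset.card_sdiff_of_subset hBsub, hB5, hA, Int.card_Icc]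
    have hmm : m^2 = 4*t+4*c+1 := by rw [hc, ht]; ring
    rw [hmm]
    omega
  · -- l1 distance
    intro p hp q hq hpq
    obtain ⟨k, hk, rfl⟩ := Finset.mem_image.mp hp
    obtain ⟨l, hl, rfl⟩ := Finset.mem_image.mp hq
    rw [Finset.mem_sdiff, hA, Finset.mem_Icc] at hk hl
    have e1 := (key k hk.1.1 hk.1.2).2.2.2.2
    have e2 := (key l hl.1.1 hl.1.2).2.2.2.2
    rw [hc] at e1 e2
    obtain ⟨w1, hw1⟩ : ∃ w, (f k).1 + (f k).2 = 2*w :=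
      ⟨k - c*(f k).1, by linear_combination -e1⟩
    obtain ⟨w2, hw2⟩ : ∃ w, (f l).1 + (f l).2 = 2*w :=
      ⟨l - c*(f l).1, by linear_combination -e2⟩
    have hne : (f k).1 ≠ (f l).1 ∨ (f k).2 ≠ (f l).2 := by
      by_contra h
      push_neg at h
      exact hpq (Prod.ext h.1 h.2)
    rcases abs_cases ((f k).1 - (f l).1) with ⟨ha, _⟩ | ⟨ha, _⟩ <;>
      rcases abs_cases ((f k).2 - (f l).2) with ⟨hb, _⟩ | ⟨hb, _⟩ <;>
      omega
  · -- distance from center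
    intro p hp
    obtain ⟨k, hk, rfl⟩ := Finset.mem_image.mp hp
    rw [Finset.mem_sdiff] at hk
    obtain ⟨hkA, hkB⟩ := hk
    rw [hA, Finset.mem_Icc] at hkA
    simp only [hB, Finset.mem_insert, Finset.mem_singleton] at hkB
    push_neg at hkB
    rw [hmc]
    by_contra hcon
    push_neg at hcon
    have h1 : |c - (f k).1| < 2 := lt_of_le_of_lt (le_max_left _ _) hcon
    have h2 : |c - (f k).2| < 2 := lt_of_le_of_lt (le_max_right _ _) hcon
    rw [abs_lt] at h1 h2
    have heq := (key k hkA.1 hkA.2).2.2.2.2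
    rw [hc] at heq
    have hx : (f k).1 = c-1 ∨ (f k).1 = c ∨ (f k).1 = c+1 := by omega
    rcases hx with h | h | h
    · have h3 : 2*k = 2*t - c - 1 + (f k).2 := by
        rw [h] at heq; rw [ht]; linear_combination heq
      omega
    · have h3 : 2*k = 2*t + c + (f k).2 := by
        rw [h] at heq; rw [ht]; linear_combination heq
      omega
    · have h3 : 2*k = 2*t + 3*c + 1 + (f k).2 := by
        rw [h] at heq; rw [ht]; linear_combination heq
      omega
end

section
/- Let ψ ∈ ℂ² be any single-qubit state and let ℓ ∈ {0, 1, 2, 3}. Then there exist complex numbers z₀, z₁, z₂, z₃, each of absolute value 1, such that the three-qubit vector ψ ⊗ ((I ⊗ σ_ℓ) Φ₀) equals (1/2) · Σ_{k=0}^{3} Φ_k ⊗ (z_k · σ_ℓ σ_k ψ), where in each summand Φ_k occupies the first two tensor factors (registers S and A) and σ_ℓ σ_k ψ occupies the third (register B). Consequently, if a Bell measurement on the first two qubits yields outcome k, the third qubit is left in the state σ_ℓ σ_k ψ up to global phase, which is the correctness of quantum teleportation through the shared entangled state σ_ℓ^B Φ₀. -/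
/-!
Read a two-qubit vector as a 2 × 2 matrix. Then the Bell state `Φ_k` is, up to a phase `c_k`,
the Pauli matrix `σ_k / √2`, and `(I ⊗ M) Φ₀` is `Mᵀ / √2`. After the phases `z_k = c̄_k` cancel
the `c_k`, the teleportation identity is the completeness relation
`∑ k, (σ_k)_{sa} (σ_k)_{ed} = 2 δ_{sd} δ_{ae}` of the Pauli basis, and this holds for every
matrix `M` in place of `σ_ℓ`.
-/

noncomputable section

/-- The Pauli matrices `σ₀ = I`, `σ₁ = X`, `σ₂ = Y`, `σ₃ = Z`. -/
def Pauli : Fin 4 → Matrix (Fin 2) (Fin 2) ℂ :=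
  ![!![1, 0; 0, 1],
    !![0, 1; 1, 0],
    !![0, -Complex.I; Complex.I, 0],
    !![1, 0; 0, -1]]

/-- The standard basis vector `|ab⟩` of the two-qubit space. -/
def ket (a b : Fin 2) : Fin 2 × Fin 2 → ℂ :=
  fun p => if p = (a, b) then 1 else 0

/-- The four Bell states `Φ₀, Φ₁, Φ₂, Φ₃`. -/
def BellState : Fin 4 → (Fin 2 × Fin 2 → ℂ) :=
  ![((Real.sqrt 2 : ℂ))⁻¹ • (ket 0 0 + ket 1 1),
    ((Real.sqrt 2 : ℂ))⁻¹ • (ket 0 1 + ket 1 0),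
    ((Real.sqrt 2 : ℂ))⁻¹ • (ket 0 1 - ket 1 0),
    ((Real.sqrt 2 : ℂ))⁻¹ • (ket 0 0 - ket 1 1)]

open Matrix

def bellPhase : Fin 4 → ℂ := ![1, 1, Complex.I, 1]

lemma bellPhase_mul_star (k : Fin 4) : bellPhase k * star (bellPhase k) = 1 := by
  fin_cases k <;> simp [bellPhase]

lemma norm_star_bellPhase (k : Fin 4) : ‖star (bellPhase k)‖ = 1 := by
  fin_cases k <;> simp [bellPhase]

lemma bellState_apply (k : Fin 4) (s a : Fin 2) :
    BellState k (s, a) = bellPhase k * Pauli k s a / Real.sqrt 2 := by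
  fin_cases k <;> fin_cases s <;> fin_cases a <;>
    simp [BellState, bellPhase, Pauli, ket, div_eq_inv_mul]

lemma sum_pauli_mul_pauli (i j m n : Fin 2) :
    ∑ k, Pauli k i j * Pauli k m n = if i = n ∧ j = m then 2 else 0 := by
  fin_cases i <;> fin_cases j <;> fin_cases m <;> fin_cases n <;>
    simp [Fin.sum_univ_four, Pauli] <;> norm_num

lemma kroneckerMap_one_mulVec_apply {R m n : Type*} [CommSemiring R] [Fintype m] [DecidableEq m]
    [Fintype n] (M : Matrix n n R) (v : m × n → R) (a : m) (b : n) :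
    (kroneckerMap (· * ·) (1 : Matrix m m R) M *ᵥ v) (a, b) = ∑ d, M b d * v (a, d) := by
  simp [mulVec, dotProduct, Fintype.sum_prod_type, one_apply]

lemma kroneckerMap_one_mulVec_bellState_zero (M : Matrix (Fin 2) (Fin 2) ℂ) (a b : Fin 2) :
    (kroneckerMap (· * ·) (1 : Matrix (Fin 2) (Fin 2) ℂ) M *ᵥ BellState 0) (a, b) =
      M b a / Real.sqrt 2 := by
  simp only [kroneckerMap_one_mulVec_apply, bellState_apply, Pauli, bellPhase]
  fin_cases a <;> simp [Fin.sum_univ_two, div_eq_mul_inv]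

lemma sum_pauli_mul_mulVec (M : Matrix (Fin 2) (Fin 2) ℂ) (ψ : Fin 2 → ℂ) (s a b : Fin 2) :
    ∑ k, Pauli k s a * ((M * Pauli k) *ᵥ ψ) b = 2 * (M b a * ψ s) := by
  calc ∑ k, Pauli k s a * ((M * Pauli k) *ᵥ ψ) b
      = ∑ k, ∑ e, ∑ d, M b e * ψ d * (Pauli k s a * Pauli k e d) := by
        simp_rw [← mulVec_mulVec]
        simp only [mulVec, dotProduct, Finset.mul_sum]
        exact Finset.sum_congr rfl fun _ _ => Finset.sum_congr rfl fun _ _ =>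
          Finset.sum_congr rfl fun _ _ => by ring
    _ = ∑ e, ∑ d, M b e * ψ d * ∑ k, Pauli k s a * Pauli k e d := by
        simp only [Finset.mul_sum]
        rw [Finset.sum_comm]
        exact Finset.sum_congr rfl fun _ _ => Finset.sum_comm
    _ = 2 * (M b a * ψ s) := by
        simp only [sum_pauli_mul_pauli, ite_and, mul_ite, mul_zero, Finset.sum_ite_eq,
          Finset.mem_univ, if_true]
        ring

theorem teleportation (M : Matrix (Fin 2) (Fin 2) ℂ) (ψ : Fin 2 → ℂ) :
    (fun p : Fin 2 × Fin 2 × Fin 2 =>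
        ψ p.1 *
          (kroneckerMap (· * ·) (1 : Matrix (Fin 2) (Fin 2) ℂ) M *ᵥ BellState 0) (p.2.1, p.2.2))
      = (1 / 2 : ℂ) • ∑ k : Fin 4,
          (fun p : Fin 2 × Fin 2 × Fin 2 =>
            BellState k (p.1, p.2.1) * (star (bellPhase k) • ((M * Pauli k) *ᵥ ψ)) p.2.2) := by
  funext ⟨s, a, b⟩
  have h : ∀ k, BellState k (s, a) * (star (bellPhase k) * ((M * Pauli k) *ᵥ ψ) b) =
      Pauli k s a * ((M * Pauli k) *ᵥ ψ) b / Real.sqrt 2 := by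
    intro k
    rw [bellState_apply]
    linear_combination
      (Pauli k s a * ((M * Pauli k) *ᵥ ψ) b / Real.sqrt 2) * bellPhase_mul_star k
  simp only [kroneckerMap_one_mulVec_bellState_zero, Pi.smul_apply, Finset.sum_apply, smul_eq_mul]
  rw [Finset.sum_congr rfl fun k _ => h k, ← Finset.sum_div, sum_pauli_mul_mulVec]
  ring

/-- **Correctness of quantum teleportation through the shared entangled state
`σ_ℓ^B Φ₀`.**  For any single-qubit state `ψ` and any `ℓ ∈ {0,1,2,3}` there are
unimodular phases `z₀, z₁, z₂, z₃` such that
`ψ ⊗ ((I ⊗ σ_ℓ) Φ₀) = (1/2) Σ_k Φ_k ⊗ (z_k • σ_ℓ σ_k ψ)`,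
where `Φ_k` occupies the first two tensor factors (registers `S`, `A`) and
`σ_ℓ σ_k ψ` the third (register `B`). -/
theorem stmt_12 (ψ : Fin 2 → ℂ) (ℓ : Fin 4) :
    ∃ z : Fin 4 → ℂ, (∀ k, ‖z k‖ = 1) ∧
      (fun p : Fin 2 × Fin 2 × Fin 2 =>
          ψ p.1 *
            ((Matrix.kroneckerMap (· * ·) (1 : Matrix (Fin 2) (Fin 2) ℂ)
                (Pauli ℓ)).mulVec (BellState 0)) (p.2.1, p.2.2))
        = (1 / 2 : ℂ) • ∑ k : Fin 4,
            (fun p : Fin 2 × Fin 2 × Fin 2 =>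
              BellState k (p.1, p.2.1) *
                (z k • ((Pauli ℓ * Pauli k).mulVec ψ)) p.2.2) :=
  ⟨fun k => star (bellPhase k), norm_star_bellPhase, teleportation (Pauli ℓ) ψ⟩

end
end
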